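/- Let k ≥ 2. Consider n agents with signals s : Fin n → ℕ in {0,…,k−1}, m items, and for each agent i and subset T of the items a valuation v_{iT} : (Fin n → ℝ) → ℝ that is SOS, nonnegative on nonnegative vectors, and weakly increasing in each coordinate. Let W* = max over allocations T of Σ_i v_{iT_i}(s). Let RT = (1/(k−1)) · Σ_{ℓ=1}^{k−1} max over allocations S of Σ_{i ∈ N_{≥ℓ}} v_{iS_i}(ŝ^ℓ), where N_{≥ℓ} = {i : s_i ≥ ℓ} and ŝ^ℓ(j) = min(s_j, ℓ). Let RS = (1/2ⁿ) · Σ_{B ⊆ Fin n} max over allocations S of Σ_{i∈B} v_{iS_i}( s|_{Bᶜ} ). Then ((k−1)/(k+3))·RT + (4/(k+3))·RS ≥ W*/(k+3). Hence the mechanism that runs Random Threshold with probability (k−1)/(k+3) and Random Sampling otherwise gives a (k+3)-approximation to the optimal social welfare. -/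

import Mathlib

/-- `v` is a `d`-approximate submodular-over-signals (`d`-SOS) valuation;
`SOS` means `1`-SOS. -/
def dSOS {n : ℕ} (d : ℝ) (v : (Fin n → ℝ) → ℝ) : Prop :=
  ∀ (j : Fin n) (x δ : ℝ), 0 ≤ x → 0 ≤ δ →
    ∀ t t' : Fin n → ℝ, (∀ l, 0 ≤ t' l) → (∀ l, t' l ≤ t l) →
      d * (v (Function.update t' j (x + δ)) - v (Function.update t' j x)) ≥
        v (Function.update t j (x + δ)) - v (Function.update t j x)

/-- An allocation of the `m` items to the `n` agents: disjoint bundles. -/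
def IsAlloc {n m : ℕ} (T : Fin n → Finset (Fin m)) : Prop :=
  ∀ i j : Fin n, i ≠ j → Disjoint (T i) (T j)

/-- Supremum of `f` over all allocations of the `m` items to the `n` agents. -/
noncomputable def allocSup {n m : ℕ} (f : (Fin n → Finset (Fin m)) → ℝ) : ℝ :=
  ⨆ T : {T : Fin n → Finset (Fin m) // IsAlloc T}, f T.1

open Finset

instance allocNonempty {n m : ℕ} : Nonempty {T : Fin n → Finset (Fin m) // IsAlloc T} :=
  ⟨⟨fun _ => ∅, fun _ _ _ => disjoint_empty_left _⟩⟩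

lemma le_allocSup {n m : ℕ} (f : (Fin n → Finset (Fin m)) → ℝ)
    {T : Fin n → Finset (Fin m)} (hT : IsAlloc T) : f T ≤ allocSup f := by
  exact le_ciSup (f := fun T : {T : Fin n → Finset (Fin m) // IsAlloc T} => f T.1)
    (Set.Finite.bddAbove (Set.finite_range _)) ⟨T, hT⟩

/-- Key telescoping lemma for SOS valuations: raising coordinates where `a`
differs from `b` gains at least as much starting from the smaller base `a'`. -/
lemma sos_tele {n : ℕ} {v : (Fin n → ℝ) → ℝ} (hsos : dSOS 1 v) (b : Fin n → ℝ) :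
    ∀ (N : ℕ) (a a' : Fin n → ℝ),
    (Finset.univ.filter fun l => a l ≠ b l).card ≤ N →
    (∀ l, 0 ≤ a' l) → (∀ l, a' l ≤ a l) → (∀ l, a l ≤ b l) →
    (∀ l, a l ≠ b l → a' l = a l) →
    v b - v a ≤ v (fun l => if a l = b l then a' l else b l) - v a' := by
  intro N
  induction N with
  | zero =>
    intro a a' hcard h0 h1 h2 h3
    have hab : a = b := by
      funext l
      by_contra h
      have hmem : l ∈ Finset.univ.filter fun l => a l ≠ b l := by simp [h]
      have := Finset.card_pos.mpr ⟨l, hmem⟩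
      omega
    subst hab
    have he : (fun l => if a l = a l then a' l else a l) = a' :=
      funext fun l => if_pos rfl
    rw [he]
    linarith
  | succ N ih =>
    intro a a' hcard h0 h1 h2 h3
    by_cases hab : ∀ l, a l = b l
    · have hab' : a = b := funext hab
      subst hab'
      have he : (fun l => if a l = a l then a' l else a l) = a' :=
        funext fun l => if_pos rfl
      rw [he]
      linarith
    · push_neg at hab
      obtain ⟨j, hj⟩ := hab
      set a₁ := Function.update a j (b j) with ha₁
      set a'₁ := Function.update a' j (b j) with ha'₁
      have haj : a' j = a j := h3 j hj
      have ha0 : 0 ≤ a j := le_trans (h0 j) (h1 j)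
      -- SOS step
      have hstep := hsos j (a j) (b j - a j) ha0 (by linarith [h2 j]) a a' h0 h1
      have e1 : a j + (b j - a j) = b j := by ring
      rw [e1] at hstep
      have e2 : Function.update a j (a j) = a := Function.update_eq_self _ _
      have e3 : Function.update a' j (a j) = a' := by
        rw [← haj]; exact Function.update_eq_self _ _
      rw [e2, e3] at hstep
      -- recursive step
      have hsub : (Finset.univ.filter fun l => a₁ l ≠ b l) ⊆
          (Finset.univ.filter fun l => a l ≠ b l).erase j := by
        intro l hl
        simp only [Finset.mem_filter, Finset.mem_univ, true_and] at hl
        have hlj : l ≠ j := by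
          intro e; subst e
          exact hl (by simp [ha₁])
        refine Finset.mem_erase.mpr ⟨hlj, ?_⟩
        simp only [Finset.mem_filter, Finset.mem_univ, true_and]
        rwa [ha₁, Function.update_of_ne hlj] at hl
      have hjmem : j ∈ Finset.univ.filter fun l => a l ≠ b l := by simp [hj]
      have hcard1 : (Finset.univ.filter fun l => a₁ l ≠ b l).card ≤ N := by
        have := Finset.card_le_card hsub
        rw [Finset.card_erase_of_mem hjmem] at this
        have hpos := Finset.card_pos.mpr ⟨j, hjmem⟩
        omega
      have h0' : ∀ l, 0 ≤ a'₁ l := by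
        intro l
        rcases eq_or_ne l j with rfl | hlj
        · simp only [ha'₁, Function.update_self]
          linarith [h2 l, ha0]
        · simp only [ha'₁, Function.update_of_ne hlj]
          exact h0 l
      have h1' : ∀ l, a'₁ l ≤ a₁ l := by
        intro l
        rcases eq_or_ne l j with rfl | hlj
        · simp [ha'₁, ha₁, Function.update_self]
        · simp only [ha'₁, ha₁, Function.update_of_ne hlj]
          exact h1 l
      have h2' : ∀ l, a₁ l ≤ b l := by
        intro l
        rcases eq_or_ne l j with rfl | hlj
        · simp [ha₁, Function.update_self]
        · simp only [ha₁, Function.update_of_ne hlj]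
          exact h2 l
      have h3' : ∀ l, a₁ l ≠ b l → a'₁ l = a₁ l := by
        intro l hl
        have hlj : l ≠ j := by
          intro e; subst e; exact hl (by simp [ha₁])
        rw [ha₁, Function.update_of_ne hlj] at hl
        rw [ha'₁, ha₁, Function.update_of_ne hlj, Function.update_of_ne hlj]
        exact h3 l hl
      have hrec := ih a₁ a'₁ hcard1 h0' h1' h2' h3'
      have hBeq : (fun l => if a₁ l = b l then a'₁ l else b l) =
          (fun l => if a l = b l then a' l else b l) := by
        funext l
        rcases eq_or_ne l j with rfl | hlj
        · rw [if_pos (by simp [ha₁]), if_neg hj]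
          simp [ha'₁]
        · rw [ha₁, ha'₁]
          simp only [Function.update_of_ne hlj]
      rw [hBeq] at hrec
      linarith

/-- Per-agent bound: the value at the full signal profile is at most the value
at the profile capped at the agent's own signal plus the value at the profile
with the agent's own signal zeroed out. -/
lemma per_agent {n : ℕ} {v : (Fin n → ℝ) → ℝ} (hsos : dSOS 1 v)
    (hpos : ∀ t : Fin n → ℝ, (∀ l, 0 ≤ t l) → 0 ≤ v t)
    (s : Fin n → ℕ) (i : Fin n) :
    v (fun j => (s j : ℝ)) ≤
      (if 1 ≤ s i then v (fun j => ((min (s j) (s i) : ℕ) : ℝ)) else 0)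
        + v (fun j => if j = i then 0 else (s j : ℝ)) := by
  by_cases h1i : 1 ≤ s i
  · rw [if_pos h1i]
    set a : Fin n → ℝ := fun j => ((min (s j) (s i) : ℕ) : ℝ) with ha
    set b : Fin n → ℝ := fun j => (s j : ℝ) with hb
    set a' : Fin n → ℝ := Function.update a i 0 with ha'
    have hai : a i = b i := by simp [ha, hb]
    have h0 : ∀ l, 0 ≤ a' l := by
      intro l
      rcases eq_or_ne l i with rfl | hl
      · simp [ha', Function.update_self]
      · simp only [ha', Function.update_of_ne hl, ha]
        positivity
    have h1 : ∀ l, a' l ≤ a l := by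
      intro l
      rcases eq_or_ne l i with rfl | hl
      · simp only [ha', Function.update_self, ha]
        positivity
      · simp [ha', Function.update_of_ne hl]
    have h2 : ∀ l, a l ≤ b l := by
      intro l
      simp only [ha, hb]
      exact_mod_cast Nat.cast_le.mpr (min_le_left _ _)
    have h3 : ∀ l, a l ≠ b l → a' l = a l := by
      intro l hl
      have hli : l ≠ i := by intro e; subst e; exact hl hai
      rw [ha', Function.update_of_ne hli]
    have key := sos_tele hsos b _ a a' le_rfl h0 h1 h2 h3
    have hB : (fun l => if a l = b l then a' l else b l) =
        (fun j => if j = i then 0 else (s j : ℝ)) := by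
      funext l
      rcases eq_or_ne l i with rfl | hl
      · rw [if_pos hai, if_pos rfl, ha', Function.update_self]
      · rw [if_neg hl]
        by_cases hc : a l = b l
        · rw [if_pos hc, ha', Function.update_of_ne hl, hc]
        · rw [if_neg hc]
    rw [hB] at key
    have hva' : 0 ≤ v a' := hpos a' h0
    linarith
  · rw [if_neg h1i]
    have hsi : s i = 0 := by omega
    have he : (fun j => if j = i then 0 else (s j : ℝ)) = fun j => (s j : ℝ) := by
      funext j
      rcases eq_or_ne j i with rfl | hj
      · simp [hsi]
      · rw [if_neg hj]
    rw [he]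
    linarith

/-- Subadditivity-type pairing bound used in the random-sampling analysis. -/
lemma pair_bound {n : ℕ} {v : (Fin n → ℝ) → ℝ} (hsos : dSOS 1 v)
    (hpos : ∀ t : Fin n → ℝ, (∀ l, 0 ≤ t l) → 0 ≤ v t)
    (hmono : ∀ t t' : Fin n → ℝ, (∀ l, t l ≤ t' l) → v t ≤ v t')
    (s : Fin n → ℕ) (i : Fin n) (B : Finset (Fin n)) (hiB : i ∈ B) :
    v (fun j => if j = i then 0 else (s j : ℝ)) ≤
      v (fun j => if j ∈ B then 0 else (s j : ℝ))
        + v (fun j => if j ∈ Bᶜ ∪ {i} then 0 else (s j : ℝ)) := by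
  set a : Fin n → ℝ := fun j => if j ∈ B then 0 else (s j : ℝ) with ha
  set b : Fin n → ℝ := fun j => if j = i then 0 else (s j : ℝ) with hb
  set a' : Fin n → ℝ := fun _ => 0 with ha'
  have h0 : ∀ l, 0 ≤ a' l := fun l => le_refl 0
  have h1 : ∀ l, a' l ≤ a l := by
    intro l
    simp only [ha, ha']
    by_cases hl : l ∈ B <;> simp [hl]
  have h2 : ∀ l, a l ≤ b l := by
    intro l
    simp only [ha, hb]
    rcases eq_or_ne l i with rfl | hl
    · simp [hiB]
    · rw [if_neg hl]
      by_cases hlB : l ∈ B <;> simp [hlB]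
  have hne : ∀ l, a l ≠ b l → l ∈ B ∧ l ≠ i := by
    intro l hl
    constructor
    · by_contra hlB
      apply hl
      rcases eq_or_ne l i with rfl | hli
      · exact absurd hiB hlB
      · simp [ha, hb, hlB, hli]
    · intro e; subst e
      exact hl (by simp [ha, hb, hiB])
  have h3 : ∀ l, a l ≠ b l → a' l = a l := by
    intro l hl
    obtain ⟨hlB, _⟩ := hne l hl
    simp [ha', ha, hlB]
  have key := sos_tele hsos b _ a a' le_rfl h0 h1 h2 h3
  have hBle : ∀ l, (if a l = b l then a' l else b l) ≤
      (if l ∈ Bᶜ ∪ {i} then 0 else (s l : ℝ)) := by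
    intro l
    by_cases hc : a l = b l
    · rw [if_pos hc]
      simp only [ha']
      by_cases hl : l ∈ Bᶜ ∪ {i} <;> simp [hl] <;> split_ifs <;> positivity
    · rw [if_neg hc]
      obtain ⟨hlB, hli⟩ := hne l hc
      have hnm : l ∉ Bᶜ ∪ {i} := by
        simp [Finset.mem_union, Finset.mem_compl, hlB, hli]
      rw [if_neg hnm]
      simp [hb, hli]
  have hm := hmono _ _ hBle
  have hv0 : 0 ≤ v a' := hpos a' h0
  linarith

/-- Theorem 6.1 (thm:k-sig-sm): for combinatorial auctions with
single-dimensional signals `s i ∈ {0,…,k−1}` and SOS valuations (nonnegative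
on nonnegative vectors and weakly increasing in each coordinate), running
Random Threshold with probability `(k−1)/(k+3)` and Random Sampling otherwise
yields expected welfare at least `W*/(k+3)`, where `W*` is the optimal
welfare, `RT` the expected welfare guarantee of Random Threshold, and `RS`
that of Random Sampling. -/
theorem k_signals_high_low (k : ℕ) (hk : 2 ≤ k) (n m : ℕ)
    (s : Fin n → ℕ) (hs : ∀ i, s i ≤ k - 1)
    (v : Fin n → Finset (Fin m) → (Fin n → ℝ) → ℝ)
    (hsos : ∀ i T, dSOS 1 (v i T))
    (hpos : ∀ i T (t : Fin n → ℝ), (∀ l, 0 ≤ t l) → 0 ≤ v i T t)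
    (hmono : ∀ i T (t t' : Fin n → ℝ), (∀ l, t l ≤ t' l) → v i T t ≤ v i T t') :
    ((k : ℝ) - 1) / ((k : ℝ) + 3) *
        ((1 / ((k : ℝ) - 1)) * ∑ ℓ ∈ Finset.Icc 1 (k - 1),
          allocSup (fun S => ∑ i ∈ Finset.univ.filter (fun i => ℓ ≤ s i),
            v i (S i) (fun j => ((min (s j) ℓ : ℕ) : ℝ))))
      + (4 / ((k : ℝ) + 3)) *
        ((1 / 2 ^ n : ℝ) * ∑ B ∈ (Finset.univ : Finset (Fin n)).powerset,
          allocSup (fun S => ∑ i ∈ B,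
            v i (S i) (fun j => if j ∈ B then 0 else (s j : ℝ))))
      ≥ allocSup (fun T => ∑ i, v i (T i) (fun j => (s j : ℝ))) / ((k : ℝ) + 3) := by
  have hk2 : (2 : ℝ) ≤ (k : ℝ) := by exact_mod_cast hk
  have hk1 : ((k : ℝ) - 1) ≠ 0 := by linarith
  have hk3 : (0 : ℝ) < (k : ℝ) + 3 := by linarith
  set SA := ∑ ℓ ∈ Finset.Icc 1 (k - 1),
      allocSup (fun S => ∑ i ∈ Finset.univ.filter (fun i => ℓ ≤ s i),
        v i (S i) (fun j => ((min (s j) ℓ : ℕ) : ℝ))) with hSA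
  set SB := ∑ B ∈ (Finset.univ : Finset (Fin n)).powerset,
      allocSup (fun S => ∑ i ∈ B,
        v i (S i) (fun j => if j ∈ B then 0 else (s j : ℝ))) with hSB
  have key : allocSup (fun T => ∑ i, v i (T i) (fun j => (s j : ℝ)))
      ≤ SA + 4 * ((1 / 2 ^ n : ℝ) * SB) := by
    unfold allocSup
    apply ciSup_le
    rintro ⟨T, hT⟩
    -- main chain for the fixed allocation T
    have step1 : ∑ i, v i (T i) (fun j => (s j : ℝ)) ≤
        (∑ i ∈ Finset.univ.filter (fun i => 1 ≤ s i),
          v i (T i) (fun j => ((min (s j) (s i) : ℕ) : ℝ)))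
        + ∑ i, v i (T i) (fun j => if j = i then 0 else (s j : ℝ)) := by
      rw [Finset.sum_filter, ← Finset.sum_add_distrib]
      exact Finset.sum_le_sum fun i _ =>
        per_agent (hsos i (T i)) (hpos i (T i)) s i
    have part3 : (∑ i ∈ Finset.univ.filter (fun i => 1 ≤ s i),
        v i (T i) (fun j => ((min (s j) (s i) : ℕ) : ℝ))) ≤ SA := by
      have hmaps : ∀ i ∈ Finset.univ.filter (fun i => 1 ≤ s i),
          s i ∈ Finset.Icc 1 (k - 1) := by
        intro i hi
        simp only [Finset.mem_filter, Finset.mem_univ, true_and] at hi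
        exact Finset.mem_Icc.mpr ⟨hi, hs i⟩
      calc (∑ i ∈ Finset.univ.filter (fun i => 1 ≤ s i),
            v i (T i) (fun j => ((min (s j) (s i) : ℕ) : ℝ)))
          = ∑ ℓ ∈ Finset.Icc 1 (k - 1),
              ∑ i ∈ (Finset.univ.filter (fun i => 1 ≤ s i)).filter (fun i => s i = ℓ),
                v i (T i) (fun j => ((min (s j) (s i) : ℕ) : ℝ)) :=
            (Finset.sum_fiberwise_of_maps_to hmaps _).symm
        _ ≤ ∑ ℓ ∈ Finset.Icc 1 (k - 1),
              ∑ i ∈ Finset.univ.filter (fun i => ℓ ≤ s i),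
                v i (T i) (fun j => ((min (s j) ℓ : ℕ) : ℝ)) := by
            refine Finset.sum_le_sum fun ℓ hℓ => ?_
            have heq : (∑ i ∈ (Finset.univ.filter (fun i => 1 ≤ s i)).filter (fun i => s i = ℓ),
                v i (T i) (fun j => ((min (s j) (s i) : ℕ) : ℝ)))
                = ∑ i ∈ (Finset.univ.filter (fun i => 1 ≤ s i)).filter (fun i => s i = ℓ),
                v i (T i) (fun j => ((min (s j) ℓ : ℕ) : ℝ)) := by
              refine Finset.sum_congr rfl fun i hi => ?_
              simp only [Finset.mem_filter] at hi
              rw [hi.2]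
            rw [heq]
            refine Finset.sum_le_sum_of_subset_of_nonneg ?_ ?_
            · intro i hi
              simp only [Finset.mem_filter, Finset.mem_univ, true_and] at hi ⊢
              omega
            · intro i _ _
              apply hpos
              intro l; positivity
        _ ≤ SA := by
            rw [hSA]
            exact Finset.sum_le_sum fun ℓ _ =>
              le_allocSup (fun S => ∑ i ∈ Finset.univ.filter (fun i => ℓ ≤ s i),
                v i (S i) (fun j => ((min (s j) ℓ : ℕ) : ℝ))) hT
    have part4 : (∑ i, v i (T i) (fun j => if j = i then 0 else (s j : ℝ)))
        ≤ 4 * ((1 / 2 ^ n : ℝ) * SB) := by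
      set g : Fin n → Finset (Fin n) → ℝ :=
        fun i B => v i (T i) (fun j => if j ∈ B then 0 else (s j : ℝ)) with hg
      set c : Fin n → ℝ :=
        fun i => v i (T i) (fun j => if j = i then 0 else (s j : ℝ)) with hc
      have hstep1 : ∀ B ∈ (Finset.univ : Finset (Fin n)).powerset,
          (∑ i ∈ B, g i B) ≤ allocSup (fun S => ∑ i ∈ B,
            v i (S i) (fun j => if j ∈ B then 0 else (s j : ℝ))) :=
        fun B _ => le_allocSup (fun S => ∑ i ∈ B,
          v i (S i) (fun j => if j ∈ B then 0 else (s j : ℝ))) hT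
      have hswap : ∑ B ∈ (Finset.univ : Finset (Fin n)).powerset, ∑ i ∈ B, g i B
          = ∑ i, ∑ B ∈ (Finset.univ : Finset (Fin n)).powerset.filter (fun B => i ∈ B),
              g i B := by
        have h1 : ∀ B ∈ (Finset.univ : Finset (Fin n)).powerset,
            (∑ i ∈ B, g i B) = ∑ i, if i ∈ B then g i B else 0 := by
          intro B _
          rw [Finset.sum_ite_mem, Finset.univ_inter]
        rw [Finset.sum_congr rfl h1, Finset.sum_comm]
        refine Finset.sum_congr rfl fun i _ => ?_
        rw [Finset.sum_filter]
      have hpair : ∀ i, ((2 : ℝ) ^ n / 4) * c i ≤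
          ∑ B ∈ (Finset.univ : Finset (Fin n)).powerset.filter (fun B => i ∈ B), g i B := by
        intro i
        set PB := (Finset.univ : Finset (Fin n)).powerset.filter (fun B => i ∈ B) with hPB
        set σ : Finset (Fin n) → Finset (Fin n) := fun B => Bᶜ ∪ {i} with hσ
        have hmem : ∀ B ∈ PB, σ B ∈ PB := by
          intro B hB
          simp [hPB, hσ]
        have hinv : ∀ B ∈ PB, σ (σ B) = B := by
          intro B hB
          simp only [hPB, Finset.mem_filter, Finset.mem_powerset] at hB
          ext l
          simp only [hσ, Finset.mem_union, Finset.mem_compl, Finset.mem_singleton]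
          rcases eq_or_ne l i with rfl | hl
          · simp [hB.2]
          · simp [hl]
        have hre : ∑ B ∈ PB, g i (σ B) = ∑ B ∈ PB, g i B :=
          Finset.sum_bij' (fun B _ => σ B) (fun B _ => σ B) hmem hmem hinv hinv
            (fun B hB => rfl)
        have hub : ∑ _B ∈ PB, c i ≤ ∑ B ∈ PB, (g i B + g i (σ B)) := by
          refine Finset.sum_le_sum fun B hB => ?_
          simp only [hPB, Finset.mem_filter] at hB
          exact pair_bound (hsos i (T i)) (hpos i (T i)) (hmono i (T i)) s i B hB.2
        rw [Finset.sum_add_distrib, hre, Finset.sum_const, nsmul_eq_mul] at hub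
        have hcardPB : PB.card = 2 ^ (n - 1) := by
          have hbij : PB.card = ((Finset.univ.erase i).powerset).card := by
            refine Finset.card_bij' (fun B _ => B.erase i) (fun C _ => insert i C)
              ?_ ?_ ?_ ?_
            · intro B hB
              simp only [hPB, Finset.mem_filter, Finset.mem_powerset] at hB
              exact Finset.mem_powerset.mpr (Finset.erase_subset_erase i (Finset.subset_univ B))
            · intro C hC
              simp only [hPB, Finset.mem_filter, Finset.mem_powerset]
              exact ⟨Finset.subset_univ _, Finset.mem_insert_self i C⟩
            · intro B hB
              simp only [hPB, Finset.mem_filter] at hB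
              exact Finset.insert_erase hB.2
            · intro C hC
              simp only [Finset.mem_powerset] at hC
              have : i ∉ C := fun h => (Finset.mem_erase.mp (hC h)).1 rfl
              exact Finset.erase_insert this
          rw [hbij, Finset.card_powerset, Finset.card_erase_of_mem (Finset.mem_univ i),
            Finset.card_univ, Fintype.card_fin]
        rw [hcardPB] at hub
        have hn1 : 1 ≤ n := i.pos
        have h2n : (2 : ℝ) ^ n = 2 * 2 ^ (n - 1) := by
          conv_lhs => rw [show n = (n - 1) + 1 by omega]
          rw [pow_succ]; ring
        have hcast : ((2 ^ (n - 1) : ℕ) : ℝ) = (2 : ℝ) ^ (n - 1) := by push_cast; ring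
        rw [hcast] at hub
        calc ((2 : ℝ) ^ n / 4) * c i = ((2 : ℝ) ^ (n - 1) * c i) / 2 := by
              rw [h2n]; ring
          _ ≤ (∑ B ∈ PB, g i B + ∑ B ∈ PB, g i B) / 2 := by linarith
          _ = ∑ B ∈ PB, g i B := by ring
      have h2npos : (0 : ℝ) < 2 ^ n := by positivity
      have hA : ((2 : ℝ) ^ n / 4) * ∑ i, c i ≤ SB := by
        rw [Finset.mul_sum]
        calc (∑ i, (2 : ℝ) ^ n / 4 * c i)
            ≤ ∑ i, ∑ B ∈ (Finset.univ : Finset (Fin n)).powerset.filter (fun B => i ∈ B),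
                g i B := Finset.sum_le_sum fun i _ => hpair i
          _ = ∑ B ∈ (Finset.univ : Finset (Fin n)).powerset, ∑ i ∈ B, g i B := hswap.symm
          _ ≤ SB := by rw [hSB]; exact Finset.sum_le_sum hstep1
      have hfin : ∑ i, c i ≤ SB / ((2 : ℝ) ^ n / 4) :=
        (le_div_iff₀ (by positivity)).mpr (by rwa [mul_comm])
      have heq2 : SB / ((2 : ℝ) ^ n / 4) = 4 * ((1 / 2 ^ n : ℝ) * SB) := by
        field_simp
      rw [heq2] at hfin
      exact hfin
    calc ∑ i, v i (T i) (fun j => (s j : ℝ))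
        ≤ _ := step1
      _ ≤ SA + 4 * ((1 / 2 ^ n : ℝ) * SB) := add_le_add part3 part4
  rw [ge_iff_le]
  have harith : ((k : ℝ) - 1) / ((k : ℝ) + 3) * ((1 / ((k : ℝ) - 1)) * SA)
      + (4 / ((k : ℝ) + 3)) * ((1 / 2 ^ n : ℝ) * SB)
      = (SA + 4 * ((1 / 2 ^ n : ℝ) * SB)) / ((k : ℝ) + 3) := by
    field_simp
  rw [harith]
  exact div_le_div_of_nonneg_right key hk3.le
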